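/- arXiv:2005.09690 — 3 statements merged into one kernel-verified Lean document; each statement's English description precedes it below -/
import Mathlib

section
/- If L is an algebraically closed field containing an algebraically closed field k, then the tensor product L ⊗_k L is an integral domain. -/
/-!
Let `A`, `B` be domains over an algebraically closed field `k`; we show `B ⊗[k] A` has no zero
divisors. By flatness it suffices to treat finitely generated `A`. Fix a `k`-basis `(bᵢ)` of `B`
and write elements of `A ⊗[k] B` as `∑ cᵢ ⊗ bᵢ` with coordinates `cᵢ ∈ A`. A `k`-point
`φ : A → k` sends `∑ cᵢ ⊗ bᵢ` to `∑ φ(cᵢ) bᵢ ∈ B`, which vanishes iff all `φ(cᵢ)` do. If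
`x * y = 0`, then for every `φ` the images of `x` and `y` multiply to zero in the domain `B`, so
every product of a coordinate of `x` with a coordinate of `y` vanishes at every `k`-point. By the
Nullstellensatz such a product is zero, and since `A` is a domain, `x = 0` or `y = 0`.
-/

open TensorProduct

theorem Ideal.IsMaximal.exists_algHom_ker_eq (k : Type*) {A : Type*} [Field k] [IsAlgClosed k]
    [CommRing A] [Algebra k A] [Algebra.FiniteType k A] {m : Ideal A} (hm : m.IsMaximal) :
    ∃ φ : A →ₐ[k] k, RingHom.ker φ = m := by
  let : Field (A ⧸ m) := Ideal.Quotient.field m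
  have : Module.Finite k (A ⧸ m) := finite_of_finite_type_of_isJacobsonRing k (A ⧸ m)
  let e : k ≃ₐ[k] A ⧸ m :=
    AlgEquiv.ofBijective (Algebra.ofId k _) IsAlgClosed.algebraMap_bijective_of_isIntegral
  refine ⟨e.symm.toAlgHom.comp (Ideal.Quotient.mkₐ k m), ?_⟩
  ext a
  simp [Ideal.Quotient.eq_zero_iff_mem]

theorem Algebra.FiniteType.eq_zero_of_forall_algHom_apply_eq_zero {k A : Type*} [Field k]
    [IsAlgClosed k] [CommRing A] [IsReduced A] [Algebra k A] [Algebra.FiniteType k A] {a : A}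
    (h : ∀ φ : A →ₐ[k] k, φ a = 0) : a = 0 := by
  have : IsJacobsonRing A := isJacobsonRing_of_finiteType (A := k)
  have ha : a ∈ (⊥ : Ideal A).jacobson := by
    refine Ideal.mem_sInf.mpr ?_
    rintro m ⟨-, hm⟩
    obtain ⟨φ, rfl⟩ := hm.exists_algHom_ker_eq k
    exact h φ
  rwa [IsJacobsonRing.out ‹_› Ideal.isRadical_bot, Ideal.mem_bot] at ha

theorem Subalgebra.baseChange_mono {R A : Type*} [CommSemiring R] [Semiring A] [Algebra R A]
    (B : Type*) [CommSemiring B] [Algebra R B] {C D : Subalgebra R A} (h : C ≤ D) :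
    C.baseChange B ≤ D.baseChange B := by
  rw [Subalgebra.baseChange, ← Subalgebra.val_comp_inclusion h,
    Algebra.TensorProduct.map_id_comp]
  exact AlgHom.range_comp_le_range _ _

theorem NoZeroDivisors.tensorProduct_of_flat_of_forall_fg {R B A : Type*} [CommSemiring R]
    [CommSemiring B] [Semiring A] [Algebra R A] [Algebra R B] [Module.Flat R B]
    (h : ∀ C : Subalgebra R A, C.FG → NoZeroDivisors (B ⊗[R] C)) :
    NoZeroDivisors (B ⊗[R] A) := by
  refine ⟨fun {x y} hxy => ?_⟩
  obtain ⟨C₁, hC₁, hx⟩ := exists_fg_and_mem_baseChange x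
  obtain ⟨C₂, hC₂, hy⟩ := exists_fg_and_mem_baseChange y
  let f := Algebra.TensorProduct.map (AlgHom.id B B) (C₁ ⊔ C₂).val
  have hf : Function.Injective f :=
    Module.Flat.lTensor_preserves_injective_linearMap _ Subtype.val_injective
  obtain ⟨x', rfl⟩ := (AlgHom.mem_range f).mp (Subalgebra.baseChange_mono B le_sup_left hx)
  obtain ⟨y', rfl⟩ := (AlgHom.mem_range f).mp (Subalgebra.baseChange_mono B le_sup_right hy)
  have := h _ (hC₁.sup hC₂)
  rw [← map_mul, map_eq_zero_iff f hf, mul_eq_zero] at hxy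
  simpa only [map_eq_zero_iff f hf] using hxy

namespace Algebra.TensorProduct

theorem basis_repr_rTensor {R A A' M ι : Type*} [CommSemiring R] [Semiring A] [Algebra R A]
    [Semiring A'] [Algebra R A'] [AddCommMonoid M] [Module R M] (f : A →ₗ[R] A')
    (b : Module.Basis ι R M) (z : A ⊗[R] M) :
    (basis A' b).repr (f.rTensor M z) = ((basis A b).repr z).mapRange f (map_zero f) := by
  induction z using TensorProduct.induction_on with
  | zero => simp
  | tmul a m =>
    ext i
    simp [basis_repr_tmul, ← Algebra.commutes, ← Algebra.smul_def]
  | add u v hu hv => simp [hu, hv, Finsupp.mapRange_add]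

theorem map_eq_zero_iff_forall_basis_repr {R A A' B ι : Type*} [CommSemiring R] [Semiring A]
    [Algebra R A] [Semiring A'] [Algebra R A'] [Semiring B] [Algebra R B] (φ : A →ₐ[R] A')
    (b : Module.Basis ι R B) (z : A ⊗[R] B) :
    map φ (AlgHom.id R B) z = 0 ↔ ∀ i, φ ((basis A b).repr z i) = 0 := by
  rw [show map φ (AlgHom.id R B) z = φ.toLinearMap.rTensor B z from rfl,
    ← (basis A' b).repr.map_eq_zero_iff, basis_repr_rTensor, Finsupp.ext_iff]
  simp

theorem noZeroDivisors_of_finiteType {k A B : Type*} [Field k] [IsAlgClosed k] [CommRing A]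
    [NoZeroDivisors A] [Algebra k A] [Algebra.FiniteType k A] [Ring B] [NoZeroDivisors B]
    [Algebra k B] : NoZeroDivisors (A ⊗[k] B) := by
  refine ⟨fun {x y} hxy => ?_⟩
  let b := Module.Basis.ofVectorSpace k B
  let c := (basis A b).repr
  have hcoord : ∀ i j, c x i * c y j = 0 := by
    intro i j
    refine Algebra.FiniteType.eq_zero_of_forall_algHom_apply_eq_zero (k := k) fun φ => ?_
    have hφ : map φ (AlgHom.id k B) x = 0 ∨ map φ (AlgHom.id k B) y = 0 := by
      have := congrArg (Algebra.TensorProduct.lid k B ∘ map φ (AlgHom.id k B)) hxy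
      simpa only [Function.comp_apply, map_mul, map_zero, mul_eq_zero,
        map_eq_zero_iff _ (Algebra.TensorProduct.lid k B).injective] using this
    rw [map_mul]
    rcases hφ with h | h
    · rw [(map_eq_zero_iff_forall_basis_repr φ b x).mp h i, zero_mul]
    · rw [(map_eq_zero_iff_forall_basis_repr φ b y).mp h j, mul_zero]
  by_contra! h
  obtain ⟨i, hi⟩ := Finsupp.ne_iff.mp (c.map_ne_zero_iff.mpr h.1)
  obtain ⟨j, hj⟩ := Finsupp.ne_iff.mp (c.map_ne_zero_iff.mpr h.2)
  exact mul_ne_zero hi hj (hcoord i j)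

theorem noZeroDivisors_of_isAlgClosed {k A B : Type*} [Field k] [IsAlgClosed k] [CommRing A]
    [NoZeroDivisors A] [Algebra k A] [CommRing B] [NoZeroDivisors B] [Algebra k B] :
    NoZeroDivisors (B ⊗[k] A) :=
  NoZeroDivisors.tensorProduct_of_flat_of_forall_fg fun C hC =>
    have : Algebra.FiniteType k C := (Subalgebra.fg_iff_finiteType C).mp hC
    have := noZeroDivisors_of_finiteType (k := k) (A := C) (B := B)
    MulEquiv.noZeroDivisors _ (Algebra.TensorProduct.comm k B C).toMulEquiv

end Algebra.TensorProduct

theorem stmt_0_general (k L : Type*) [Field k] [Field L] [IsAlgClosed k]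
    [Algebra k L] : IsDomain (L ⊗[k] L) :=
  have := Algebra.TensorProduct.noZeroDivisors_of_isAlgClosed (k := k) (A := L) (B := L)
  NoZeroDivisors.to_isDomain _

theorem stmt_0 (k L : Type*) [Field k] [Field L] [IsAlgClosed k] [IsAlgClosed L]
    [Algebra k L] : IsDomain (L ⊗[k] L) :=
  stmt_0_general k L
end

section
/- If k ⊆ L are algebraically closed fields and F is an intermediate field with k(x₁,…,xₙ) ⊆ F ⊆ L(x₁,…,xₙ) such that F is a finite separable extension of k(x₁,…,xₙ), then F = k(x₁,…,xₙ). -/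
/-!
Being algebraically closed, `k` is integrally closed in `L`, and since integrality of a
polynomial over `k[x]` can be tested coefficientwise, `k[x]` is integrally closed in `L[x]`.
An element `α` of `L(x)` algebraic over `k(x)` has a multiple `r • α`, `r ∈ k[x]` nonzero, that
is integral over `k[x]`. It is then integral over the factorial ring `L[x]`, hence lies in
`L[x]`, hence in `k[x]`; so `α = (r • α) / r ∈ k(x)`.
-/

set_option synthInstance.maxHeartbeats 1000000
set_option maxHeartbeats 1000000

/-- The natural inclusion `k(x₁,…,xₙ) → L(x₁,…,xₙ)` induced by `k → L`. -/
noncomputable instance ratFuncAlgebra (k L : Type*) [Field k] [Field L] [Algebra k L]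
    (n : ℕ) :
    Algebra (FractionRing (MvPolynomial (Fin n) k)) (FractionRing (MvPolynomial (Fin n) L)) :=
  RingHom.toAlgebra <| IsFractionRing.lift
    (g := (algebraMap (MvPolynomial (Fin n) L)
        (FractionRing (MvPolynomial (Fin n) L))).comp (MvPolynomial.map (algebraMap k L)))
    ((IsFractionRing.injective _ _).comp
      (MvPolynomial.map_injective (algebraMap k L) (algebraMap k L).injective))

theorem IsAlgClosed.isIntegrallyClosedIn (k L : Type*) [Field k] [IsAlgClosed k] [CommRing L]
    [IsDomain L] [Algebra k L] : IsIntegrallyClosedIn k L :=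
  isIntegrallyClosedIn_iff.mpr ⟨(algebraMap k L).injective, fun hx =>
    minpoly.degree_eq_one_iff.mp
      (IsAlgClosed.degree_eq_one_of_irreducible k (minpoly.irreducible hx))⟩

attribute [local instance] MvPolynomial.algebraMvPolynomial in
theorem MvPolynomial.isIntegrallyClosedIn (σ R S : Type*) [CommRing R] [CommRing S]
    [Algebra R S] [IsIntegrallyClosedIn R S] :
    IsIntegrallyClosedIn (MvPolynomial σ R) (MvPolynomial σ S) := by
  classical
  refine isIntegrallyClosedIn_iff.mpr
    ⟨map_injective _ (IsIntegralClosure.algebraMap_injective R R S), fun {f} hf => ?_⟩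
  refine mem_range_map_iff_coeffs_subset.mpr fun a ha => ?_
  obtain ⟨m, -, rfl⟩ := Finset.mem_image.mp (Finset.mem_coe.mp ha)
  exact IsIntegrallyClosedIn.isIntegral_iff.mp (isIntegral_iff_isIntegral_coeff.mp hf m)

theorem IsFractionRing.isIntegrallyClosedIn (R S K M : Type*) [CommRing R] [IsDomain R]
    [CommRing S] [IsIntegrallyClosed S] [Field K] [Field M]
    [Algebra R S] [IsIntegrallyClosedIn R S] [Algebra R K] [IsFractionRing R K]
    [Algebra S M] [IsFractionRing S M] [Algebra R M] [Algebra K M] [IsScalarTower R K M]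
    [IsScalarTower R S M] : IsIntegrallyClosedIn K M := by
  refine isIntegrallyClosedIn_iff.mpr ⟨(algebraMap K M).injective, fun {x} hx => ?_⟩
  obtain ⟨r, hr, hrx⟩ :=
    ((IsFractionRing.isAlgebraic_iff R K M).mpr hx.isAlgebraic).exists_integral_multiple
  obtain ⟨s, hs⟩ := IsIntegrallyClosed.isIntegral_iff.mp (hrx.tower_top (A := S))
  have hsR : IsIntegral R s := (isIntegral_algHom_iff (IsScalarTower.toAlgHom R S M)
    (IsFractionRing.injective S M)).mp (hs ▸ hrx)
  obtain ⟨t, rfl⟩ := IsIntegrallyClosedIn.isIntegral_iff.mp hsR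
  have hr' : algebraMap R K r ≠ 0 := (map_ne_zero_iff _ (IsFractionRing.injective R K)).mpr hr
  refine ⟨algebraMap R K t / algebraMap R K r, ?_⟩
  rw [map_div₀, ← IsScalarTower.algebraMap_apply, ← IsScalarTower.algebraMap_apply,
    IsScalarTower.algebraMap_apply R S M, hs, Algebra.smul_def]
  exact mul_div_cancel_left₀ x (by rwa [IsScalarTower.algebraMap_apply R K M, map_ne_zero])

section RationalFunctions

attribute [local instance] MvPolynomial.algebraMvPolynomial

variable (k L : Type*) [Field k] [Field L] [Algebra k L] (n : ℕ)

theorem ratFuncAlgebra_isScalarTower :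
    IsScalarTower (MvPolynomial (Fin n) k) (FractionRing (MvPolynomial (Fin n) k))
      (FractionRing (MvPolynomial (Fin n) L)) :=
  IsScalarTower.of_algebraMap_eq fun p => by
    rw [IsScalarTower.algebraMap_apply (MvPolynomial (Fin n) k) (MvPolynomial (Fin n) L)
      (FractionRing (MvPolynomial (Fin n) L)), MvPolynomial.algebraMap_def,
      RingHom.algebraMap_toAlgebra, IsFractionRing.lift_algebraMap, RingHom.comp_apply]

theorem ratFunc_isIntegrallyClosedIn [IsAlgClosed k] :
    IsIntegrallyClosedIn (FractionRing (MvPolynomial (Fin n) k))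
      (FractionRing (MvPolynomial (Fin n) L)) :=
  have := ratFuncAlgebra_isScalarTower k L n
  have := IsAlgClosed.isIntegrallyClosedIn k L
  have := MvPolynomial.isIntegrallyClosedIn (Fin n) k L
  IsFractionRing.isIntegrallyClosedIn (MvPolynomial (Fin n) k) (MvPolynomial (Fin n) L)
    (FractionRing (MvPolynomial (Fin n) k)) (FractionRing (MvPolynomial (Fin n) L))

end RationalFunctions

theorem stmt_2_general (k L : Type*) [Field k] [Field L] [IsAlgClosed k]
    [Algebra k L] (n : ℕ)
    (F : IntermediateField (FractionRing (MvPolynomial (Fin n) k))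
      (FractionRing (MvPolynomial (Fin n) L)))
    [FiniteDimensional (FractionRing (MvPolynomial (Fin n) k)) F] :
    F = ⊥ := by
  have := ratFunc_isIntegrallyClosedIn k L n
  refine eq_bot_iff.mpr fun α hα => ?_
  exact IsIntegrallyClosedIn.isIntegral_iff.mp
    ((IntermediateField.isIntegral_iff (x := ⟨α, hα⟩)).mp (.of_finite _ _))

/-- If `k ⊆ L` are algebraically closed fields and `F` is an intermediate field with
`k(x₁,…,xₙ) ⊆ F ⊆ L(x₁,…,xₙ)` which is finite separable over `k(x₁,…,xₙ)`, then
`F = k(x₁,…,xₙ)`. -/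
theorem stmt_2 (k L : Type*) [Field k] [Field L] [IsAlgClosed k] [IsAlgClosed L]
    [Algebra k L] (n : ℕ)
    (F : IntermediateField (FractionRing (MvPolynomial (Fin n) k))
      (FractionRing (MvPolynomial (Fin n) L)))
    [FiniteDimensional (FractionRing (MvPolynomial (Fin n) k)) F]
    [Algebra.IsSeparable (FractionRing (MvPolynomial (Fin n) k)) F] :
    F = ⊥ :=
  stmt_2_general k L n F
end

section
/- Let k ⊆ L be algebraically closed fields of characteristic p > 0. Then the map k[x]/{f^p − f : f ∈ k[x]} → L[x]/{f^p − f : f ∈ L[x]} induced by inclusion of polynomial rings is not surjective; specifically, for any a ∈ L \ k, the class of a·x^(p−1) is not in the image. -/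
/-!
If `g - a x^(p-1) = f^p - f` with `g ∈ k[x]`, compare coefficients in degrees `p^j (p-1)`.
For `j ≥ 1` the coefficient of `g` there lies in `k`, and that of `f^p` is the `p`-th power of
the coefficient of `f` in degree `p^(j-1) (p-1)`; since `k` is perfect, membership in `k`
descends from the (zero) coefficients of `f` in large degrees down to degree `p - 1`.
In degree `p - 1`, which is prime to `p`, the equation reads `g_{p-1} - a = -f_{p-1}`,
forcing `a ∈ k`.
-/

open Polynomial

namespace Polynomial

section ExpChar

variable {R : Type*} [CommSemiring R] (p : ℕ) [ExpChar R p]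

theorem coeff_pow_expChar_mul (f : R[X]) (n : ℕ) : (f ^ p).coeff (p * n) = f.coeff n ^ p := by
  rw [← map_frobenius_expand, coeff_map, coeff_expand_mul' (expChar_pos R p), frobenius_def]

theorem coeff_pow_expChar_of_not_dvd (f : R[X]) {n : ℕ} (hn : ¬p ∣ n) :
    (f ^ p).coeff n = 0 := by
  rw [← map_frobenius_expand, coeff_map, coeff_expand (expChar_pos R p), if_neg hn, map_zero]

end ExpChar

theorem coeff_mem_of_coeff_pow_sub_self_mem {L : Type*} [CommRing L] (p : ℕ) [Fact p.Prime]
    [CharP L p] {S : AddSubgroup L} (hS : ∀ c : L, c ^ p ∈ S → c ∈ S) (f : L[X]) {m : ℕ}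
    (hm : m ≠ 0) (h : ∀ j, (f ^ p - f).coeff (p ^ (j + 1) * m) ∈ S) : f.coeff m ∈ S := by
  have step : ∀ j, f.coeff (p ^ (j + 1) * m) ∈ S → f.coeff (p ^ j * m) ∈ S := by
    intro j hj
    refine hS _ ?_
    have hpow := coeff_pow_expChar_mul p f (p ^ j * m)
    rw [← mul_assoc, ← pow_succ'] at hpow
    rw [← hpow, ← sub_add_cancel ((f ^ p).coeff _) (f.coeff _), ← coeff_sub]
    exact S.add_mem (h j) hj
  have top : f.coeff (p ^ f.natDegree * m) ∈ S := by
    rw [coeff_eq_zero_of_natDegree_lt]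
    · exact S.zero_mem
    calc f.natDegree < p ^ f.natDegree := Nat.lt_pow_self (Fact.out : p.Prime).one_lt
      _ ≤ p ^ f.natDegree * m := Nat.le_mul_of_pos_right _ (Nat.pos_of_ne_zero hm)
  simpa using Nat.decreasingInduction (motive := fun j _ ↦ f.coeff (p ^ j * m) ∈ S)
    (fun j _ ↦ step j) top (Nat.zero_le _)

end Polynomial

theorem RingHom.mem_range_of_pow_mem_range {k L : Type*} [CommRing k] [CommRing L] [IsReduced L]
    (p : ℕ) [ExpChar k p] [ExpChar L p] [PerfectRing k p] (φ : k →+* L) {c : L}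
    (hc : c ^ p ∈ φ.range) : c ∈ φ.range := by
  obtain ⟨d, hd⟩ := hc
  obtain ⟨e, rfl⟩ := surjective_frobenius k p d
  exact ⟨e, frobenius_inj L p (by rw [frobenius_def, frobenius_def, ← map_pow, ← hd]; rfl)⟩

theorem stmt_3_general (k L : Type*) [Field k] [Field L] [IsAlgClosed k]
    [Algebra k L] (p : ℕ) [Fact p.Prime] [CharP k p]
    (a : L) (ha : a ∉ Set.range (algebraMap k L)) :
    ∀ (g : Polynomial k) (f : Polynomial L),
      g.map (algebraMap k L) - C a * X ^ (p - 1) ≠ f ^ p - f := by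
  intro g f h
  have : CharP L p := charP_of_injective_algebraMap (algebraMap k L).injective p
  have hp : 1 < p := (Fact.out : p.Prime).one_lt
  set S := (algebraMap k L).range
  have hcoeff (n : ℕ) :
      (f ^ p - f).coeff n = algebraMap k L (g.coeff n) - if n = p - 1 then a else 0 := by
    simp [← h, coeff_map, coeff_X_pow, mul_ite]
  have hf : f.coeff (p - 1) ∈ S := by
    refine coeff_mem_of_coeff_pow_sub_self_mem p (S := S.toAddSubgroup)
      (fun _ ↦ (algebraMap k L).mem_range_of_pow_mem_range p) f (by omega) fun j ↦ ?_
    have : p - 1 < p ^ (j + 1) * (p - 1) :=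
      lt_mul_left (by omega) (Nat.one_lt_pow (Nat.succ_ne_zero j) hp)
    rw [hcoeff, if_neg this.ne', sub_zero]
    exact ⟨_, rfl⟩
  have hlow := hcoeff (p - 1)
  rw [coeff_sub, coeff_pow_expChar_of_not_dvd p f (Nat.not_dvd_of_pos_of_lt (by omega) (by omega)),
    if_pos rfl] at hlow
  have ha' : a = algebraMap k L (g.coeff (p - 1)) + f.coeff (p - 1) := by linear_combination hlow
  exact ha (ha' ▸ S.add_mem ⟨_, rfl⟩ hf)

/-- Artin–Schreier nonsurjectivity: for algebraically closed fields `k ⊆ L` of characteristic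
`p > 0` and `a ∈ L \ k`, the class of `a·x^(p-1)` in `L[x]/{f^p - f}` is not in the image of
`k[x]/{f^p - f}`; in particular the induced map on quotients is not surjective. -/
theorem stmt_3 (k L : Type*) [Field k] [Field L] [IsAlgClosed k] [IsAlgClosed L]
    [Algebra k L] (p : ℕ) [Fact p.Prime] [CharP k p]
    (a : L) (ha : a ∉ Set.range (algebraMap k L)) :
    ∀ (g : Polynomial k) (f : Polynomial L),
      g.map (algebraMap k L) - C a * X ^ (p - 1) ≠ f ^ p - f :=
  stmt_3_general k L p a ha
end
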